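/- arXiv:2108.04572 — 2 statements merged into one kernel-verified Lean document; each statement's English description precedes it below -/
import Mathlib

section
/- If w is a binary word containing 001001 as a factor that is not a prefix, or containing 110110 as a factor that is not a prefix, then w is not overlap-free. -/
-- Words are lists over the binary alphabet `Bool` (0 = `false`, 1 = `true`).

/-- An overlap is a word of the form `u v u v u` with `u` nonempty. -/
def Overlap (w : List Bool) : Prop :=
  ∃ u v : List Bool, u ≠ [] ∧ w = u ++ v ++ u ++ v ++ u

/-- `u` is a factor of `w`. -/
def IsFactor (u w : List Bool) : Prop := ∃ x y, w = x ++ u ++ y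

/-- `w` is overlap-free if no factor of `w` is an overlap. -/
def OverlapFree (w : List Bool) : Prop := ∀ f, IsFactor f w → ¬ Overlap f

/-- `u` is a square at position `p` in `w` (there is an occurrence of `u u`
starting right after the prefix of length `p`). -/
def SquareAt (w : List Bool) (p : ℕ) (u : List Bool) : Prop :=
  ∃ x y, w = x ++ u ++ u ++ y ∧ x.length = p

/-- `p` is a centre of a square in `w`. -/
def CentreOfSquare (w : List Bool) (p : ℕ) : Prop :=
  ∃ u, u ≠ [] ∧ SquareAt w p u

open Classical in
/-- `M w` is the number of positions `p`, `1 ≤ p < |w|`, that are centres of squares in `w`. -/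
noncomputable def M (w : List Bool) : ℕ :=
  ((Finset.Ico 1 w.length).filter (fun p => CentreOfSquare w p)).card

/-- The Thue–Morse morphism: μ(0) = 01, μ(1) = 10. -/
def mu (w : List Bool) : List Bool :=
  w.flatMap (fun b => if b then [true, false] else [false, true])

/-- `tmWord n = μⁿ(0)`, the prefix of length `2 ^ n` of the Thue–Morse word. -/
def tmWord : ℕ → List Bool
  | 0 => [false]
  | n + 1 => mu (tmWord n)

/-- `u` is a factor of the (infinite) Thue–Morse word. -/
def IsTMFactor (u : List Bool) : Prop := ∃ k, IsFactor u (tmWord k)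

/-- `alpha n` is the factor of the Thue–Morse word of length `3 * 2 ^ n` starting at
position 5 (1-indexed; i.e. after the first four letters, so that `alpha 1 = 100110`). -/
def alpha (n : ℕ) : List Bool := ((tmWord (n + 3)).drop 4).take (3 * 2 ^ n)

/-- `v` is bordered if some nonempty strictly shorter word is both a prefix and a suffix of `v`. -/
def Bordered (v : List Bool) : Prop :=
  ∃ b : List Bool, b ≠ [] ∧ b.length < v.length ∧ b <+: v ∧ b <:+ v

/-- `u` is the minimal-length square at position `p` of `w`. -/
def MinSquareAt (w : List Bool) (p : ℕ) (u : List Bool) : Prop :=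
  u ≠ [] ∧ SquareAt w p u ∧ ∀ u', u' ≠ [] → SquareAt w p u' → u.length ≤ u'.length

theorem stmt5 (w x y : List Bool) (hx : x ≠ [])
    (hw : w = x ++ [false, false, true, false, false, true] ++ y ∨
          w = x ++ [true, true, false, true, true, false] ++ y) :
    ¬ OverlapFree w := by
  intro hOF
  obtain rfl | ⟨x', c, rfl⟩ := x.eq_nil_or_concat
  · exact hx rfl
  rcases hw with rfl | rfl <;> cases c
  · exact hOF [false, false, false]
      ⟨x', [true, false, false, true] ++ y, by simp⟩
      ⟨[false], [], by simp, by simp⟩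
  · exact hOF [true, false, false, true, false, false, true]
      ⟨x', y, by simp⟩
      ⟨[true], [false, false], by simp, by simp⟩
  · exact hOF [false, true, true, false, true, true, false]
      ⟨x', y, by simp⟩
      ⟨[false], [true, true], by simp, by simp⟩
  · exact hOF [true, true, true]
      ⟨x', [false, true, true, false] ++ y, by simp⟩
      ⟨[true], [], by simp, by simp⟩
end

section
/- For each n ≥ 1, let α_n be the factor of the Thue–Morse word of length 3·2^n starting at position 5. Then the square α_n α_n is overlap-free. -/
def thueMorse (n : ℕ) : Bool := decide ((Nat.digits 2 n).sum % 2 = 1)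

lemma thueMorse_two_mul_add_one (n : ℕ) : thueMorse (2 * n + 1) = !thueMorse n := by
  unfold thueMorse
  rw [add_comm, Nat.digits_add 2 one_lt_two 1 n one_lt_two (Or.inl one_ne_zero), List.sum_cons]
  cases Nat.mod_two_eq_zero_or_one (Nat.digits 2 n).sum <;> simp [Nat.add_mod, *]

lemma thueMorse_two_mul (n : ℕ) : thueMorse (2 * n) = thueMorse n := by
  rcases Nat.eq_zero_or_pos n with rfl | hn
  · rfl
  · unfold thueMorse
    rw [← add_zero (2 * n), add_comm, Nat.digits_add 2 one_lt_two 0 n two_pos (Or.inr hn.ne'),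
      List.sum_cons, zero_add]

lemma thueMorse_three_mul_two_pow_add (n r : ℕ) (hr : r < 2 ^ (n + 1)) :
    thueMorse (3 * 2 ^ n + r) = thueMorse r := by
  induction n generalizing r with
  | zero => interval_cases r <;> rfl
  | succ n ih =>
    obtain ⟨s, rfl | rfl⟩ : ∃ s, r = 2 * s ∨ r = 2 * s + 1 := ⟨r / 2, by omega⟩
    · rw [show 3 * 2 ^ (n + 1) + 2 * s = 2 * (3 * 2 ^ n + s) by ring, thueMorse_two_mul,
        thueMorse_two_mul, ih s (by rw [pow_succ] at hr; omega)]
    · rw [show 3 * 2 ^ (n + 1) + (2 * s + 1) = 2 * (3 * 2 ^ n + s) + 1 by ring,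
        thueMorse_two_mul_add_one, thueMorse_two_mul_add_one,
        ih s (by rw [pow_succ] at hr; omega)]

-- The factor `g q ⋯ g (q + 2p)` is an overlap `uvuvu` with `|uv| = p`.
def HasOverlapAt {α : Type*} (g : ℕ → α) (q p : ℕ) : Prop :=
  ∀ i, q ≤ i → i ≤ q + p → g i = g (i + p)

section MuImage

variable {g : ℕ → Bool} {q p : ℕ}

lemma HasOverlapAt.not_odd (hg : ∀ k, g (2 * k + 1) = !g (2 * k)) (h : HasOverlapAt g q p) :
    ¬ Odd p := by
  rintro ⟨d, rfl⟩
  -- `i` and `i + p` have different parities, so one of the pairs at `i` and at `i + p` is a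
  -- block `g (2k), g (2k + 1)`; hence `g` alternates on `[q, q + p]`, against `g q = g (q + p)`.
  have hstep : ∀ i, q ≤ i → i < q + (2 * d + 1) → g (i + 1) = !g i := by
    intro i hi₁ hi₂
    obtain ⟨k, rfl | rfl⟩ : ∃ k, i = 2 * k ∨ i = 2 * k + 1 := ⟨i / 2, by omega⟩
    · exact hg k
    · rw [h _ hi₁ hi₂.le, h _ (by omega) (by omega)]
      rw [show 2 * k + 1 + 1 + (2 * d + 1) = 2 * (k + d + 1) + 1 by ring,
        show 2 * k + 1 + (2 * d + 1) = 2 * (k + d + 1) by ring]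
      exact hg _
  have halt : ∀ j ≤ 2 * d + 1, (g (q + j) = g q ↔ Even j) := by
    intro j hj
    induction j with
    | zero => simp
    | succ j ih =>
      rw [← add_assoc, hstep _ (by omega) (by omega), Nat.even_add_one, ← ih (by omega)]
      cases g (q + j) <;> cases g q <;> simp
  have := (halt _ le_rfl).1 (h q le_rfl (by omega)).symm
  exact Nat.not_even_two_mul_add_one d this

lemma HasOverlapAt.half (hg : ∀ k, g (2 * k + 1) = !g (2 * k)) {r : ℕ}
    (h : HasOverlapAt g q (2 * r)) : HasOverlapAt (fun k => g (2 * k)) (q / 2) r := by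
  intro i hi₁ hi₂
  rcases Nat.even_or_odd q with ⟨s, rfl⟩ | ⟨s, rfl⟩
  · simpa [mul_add] using h (2 * i) (by omega) (by omega)
  · have := h (2 * i + 1) (by omega) (by omega)
    rwa [show 2 * i + 1 + 2 * r = 2 * (i + r) + 1 by ring, hg, hg, Bool.not_inj_iff] at this

end MuImage

def tmPeriodic (m k : ℕ) : Bool := thueMorse (k % (3 * 2 ^ m))

lemma tmPeriodic_zero (k : ℕ) : tmPeriodic 0 k = decide (k % 3 ≠ 0) := by
  unfold tmPeriodic
  have : k % 3 < 3 := Nat.mod_lt _ three_pos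
  interval_cases k % 3 <;> simp <;> rfl

lemma tmPeriodic_succ_two_mul (m k : ℕ) : tmPeriodic (m + 1) (2 * k) = tmPeriodic m k := by
  rw [tmPeriodic, show 3 * 2 ^ (m + 1) = 2 * (3 * 2 ^ m) by ring, Nat.mul_mod_mul_left,
    thueMorse_two_mul, tmPeriodic]

lemma tmPeriodic_succ_two_mul_add_one (m k : ℕ) :
    tmPeriodic (m + 1) (2 * k + 1) = !tmPeriodic m k := by
  have hP : k % (3 * 2 ^ m) < 3 * 2 ^ m := Nat.mod_lt k (by positivity)
  rw [tmPeriodic, show 3 * 2 ^ (m + 1) = 2 * (3 * 2 ^ m) by ring, Nat.add_mod,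
    Nat.mul_mod_mul_left, Nat.mod_eq_of_lt (a := 1) (by omega), Nat.mod_eq_of_lt (by omega),
    thueMorse_two_mul_add_one, tmPeriodic]

lemma not_hasOverlapAt_tmPeriodic (m q p : ℕ) (hp₀ : 0 < p) (hp : p < 3 * 2 ^ m) :
    ¬ HasOverlapAt (tmPeriodic m) q p := by
  induction m generalizing q p with
  | zero =>
    intro h
    have h₀ := h q le_rfl (by omega)
    have h₁ := h (q + 1) (by omega) (by omega)
    simp only [tmPeriodic_zero, decide_eq_decide] at h₀ h₁
    obtain rfl | rfl : p = 1 ∨ p = 2 := by omega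
    · omega
    · have h₂ := h (q + 2) (by omega) (by omega)
      simp only [tmPeriodic_zero, decide_eq_decide] at h₂
      omega
  | succ m ih =>
    intro h
    have hg (k : ℕ) : tmPeriodic (m + 1) (2 * k + 1) = !tmPeriodic (m + 1) (2 * k) := by
      rw [tmPeriodic_succ_two_mul, tmPeriodic_succ_two_mul_add_one]
    obtain ⟨r, rfl⟩ : Even p := Nat.not_odd_iff_even.1 (h.not_odd hg)
    rw [← two_mul] at h hp
    have := h.half hg
    simp only [tmPeriodic_succ_two_mul] at this
    exact ih (q / 2) r (by omega) (by rw [pow_succ] at hp; omega) this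

lemma mu_cons (b : Bool) (w : List Bool) : mu (b :: w) = b :: (!b) :: mu w := by
  cases b <;> rfl

lemma length_mu (w : List Bool) : (mu w).length = 2 * w.length := by
  induction w with
  | nil => rfl
  | cons b w ih => simp only [mu_cons, List.length_cons, ih]; ring

lemma getElem?_mu_two_mul (w : List Bool) (i : ℕ) : (mu w)[2 * i]? = w[i]? := by
  induction w generalizing i with
  | nil => rfl
  | cons b w ih => cases i <;> simp [mu_cons, mul_add, ih]

lemma getElem?_mu_two_mul_add_one (w : List Bool) (i : ℕ) :
    (mu w)[2 * i + 1]? = w[i]?.map (!·) := by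
  induction w generalizing i with
  | nil => rfl
  | cons b w ih => cases i <;> simp [mu_cons, mul_add, ih]

lemma length_tmWord (k : ℕ) : (tmWord k).length = 2 ^ k := by
  induction k with
  | zero => rfl
  | succ k ih => rw [tmWord, length_mu, ih, pow_succ, mul_comm]

lemma getElem?_tmWord (k i : ℕ) (hi : i < 2 ^ k) : (tmWord k)[i]? = some (thueMorse i) := by
  induction k generalizing i with
  | zero =>
    obtain rfl : i = 0 := by omega
    rfl
  | succ k ih =>
    rw [pow_succ] at hi
    obtain ⟨j, rfl | rfl⟩ : ∃ j, i = 2 * j ∨ i = 2 * j + 1 := ⟨i / 2, by omega⟩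
    · rw [tmWord, getElem?_mu_two_mul, ih j (by omega), thueMorse_two_mul]
    · rw [tmWord, getElem?_mu_two_mul_add_one, ih j (by omega), thueMorse_two_mul_add_one,
        Option.map_some]

lemma length_alpha (n : ℕ) : (alpha n).length = 3 * 2 ^ n := by
  rw [alpha, List.length_take, List.length_drop, length_tmWord]
  have := Nat.one_le_two_pow (n := n)
  rw [pow_add]; omega

lemma getElem?_alpha (n i : ℕ) (hi : i < 3 * 2 ^ n) :
    (alpha n)[i]? = some (thueMorse (4 + i)) := by
  rw [alpha, List.getElem?_take_of_lt hi, List.getElem?_drop,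
    getElem?_tmWord _ _ (by rw [pow_add]; omega)]

lemma tmPeriodic_eq_thueMorse (n k : ℕ) (hk : k < 3 * 2 ^ n + 2 ^ (n + 1)) :
    tmPeriodic n k = thueMorse k := by
  rw [tmPeriodic]
  rcases lt_or_ge k (3 * 2 ^ n) with h | h
  · rw [Nat.mod_eq_of_lt h]
  · rw [Nat.mod_eq_sub_mod h, Nat.mod_eq_of_lt (by omega),
      ← thueMorse_three_mul_two_pow_add n _ (by omega), Nat.add_sub_cancel' h]

lemma getElem?_alpha_append_alpha (n i : ℕ) (hn : 1 ≤ n) (hi : i < 2 * (3 * 2 ^ n)) :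
    (alpha n ++ alpha n)[i]? = some (tmPeriodic n (i + 4)) := by
  have hmod : i % (3 * 2 ^ n) < 3 * 2 ^ n := Nat.mod_lt _ (by positivity)
  have hsq : (alpha n ++ alpha n)[i]? = (alpha n)[i % (3 * 2 ^ n)]? := by
    rcases lt_or_ge i (3 * 2 ^ n) with h | h
    · rw [List.getElem?_append_left (by rwa [length_alpha]), Nat.mod_eq_of_lt h]
    · rw [List.getElem?_append_right (by rwa [length_alpha]), length_alpha,
        Nat.mod_eq_sub_mod h, Nat.mod_eq_of_lt (by omega)]
  have h4 : 4 ≤ 2 ^ (n + 1) := by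
    calc 4 = 2 ^ 2 := rfl
      _ ≤ 2 ^ (n + 1) := Nat.pow_le_pow_right two_pos (by omega)
  have hper : tmPeriodic n (i + 4) = tmPeriodic n (i % (3 * 2 ^ n) + 4) := by
    rw [tmPeriodic, tmPeriodic, Nat.mod_add_mod]
  rw [hsq, getElem?_alpha _ _ hmod, hper, tmPeriodic_eq_thueMorse _ _ (by omega), add_comm]

lemma Overlap.hasOverlapAt_of_isFactor {f w : List Bool} (hf : Overlap f) (hfw : IsFactor f w) :
    ∃ q p, 0 < p ∧ q + 2 * p < w.length ∧ HasOverlapAt (fun i => w[i]?) q p := by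
  obtain ⟨u, v, hu, rfl⟩ := hf
  obtain ⟨x, y, rfl⟩ := hfw
  have hu₀ : 0 < u.length := List.length_pos_iff.2 hu
  refine ⟨x.length, u.length + v.length, by omega, by simp; omega, fun i hi₁ hi₂ => ?_⟩
  obtain ⟨j, rfl⟩ : ∃ j, i = x.length + j := ⟨i - x.length, by omega⟩
  have hshift (f : List Bool) (k : ℕ) (hk : k < f.length) :
      (x ++ f ++ y)[x.length + k]? = f[k]? := by
    rw [List.append_assoc, List.getElem?_append_right (by omega), Nat.add_sub_cancel_left,
      List.getElem?_append_left hk]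
  have hleft : (u ++ v ++ u ++ v ++ u)[j]? = (u ++ v ++ u)[j]? := by
    rw [show u ++ v ++ u ++ v ++ u = (u ++ v ++ u) ++ (v ++ u) by simp,
      List.getElem?_append_left (by simp; omega)]
  have hright : (u ++ v ++ u ++ v ++ u)[j + (u.length + v.length)]? = (u ++ v ++ u)[j]? := by
    rw [show u ++ v ++ u ++ v ++ u = (u ++ v) ++ (u ++ v ++ u) by simp,
      List.getElem?_append_right (by simp)]
    simp
  dsimp only
  rw [hshift _ _ (by simp; omega), add_assoc, hshift _ _ (by simp; omega), hleft, hright]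

theorem stmt11 (n : ℕ) (hn : 1 ≤ n) :
    OverlapFree (alpha n ++ alpha n) := by
  intro f hfw hf
  obtain ⟨q, p, hp₀, hlen, hqp⟩ := hf.hasOverlapAt_of_isFactor hfw
  rw [List.length_append, length_alpha, ← two_mul] at hlen
  refine not_hasOverlapAt_tmPeriodic n (q + 4) p hp₀ (by omega) fun i hi₁ hi₂ => ?_
  have := hqp (i - 4) (by omega) (by omega)
  dsimp only at this
  rwa [getElem?_alpha_append_alpha n _ hn (by omega),
    getElem?_alpha_append_alpha n _ hn (by omega), Option.some_inj,
    Nat.sub_add_cancel (by omega), show i - 4 + p + 4 = i + p by omega] at this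
end
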